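/- arXiv:1810.08496 — 8 statements merged into one kernel-verified Lean document; each statement's English description precedes it below -/
import Mathlib

section
/- Let a and c be positive integers and take the case-(i) parameters (k1,k2,r,s,b) = (2a(2a−1)c, 2a−1, 0, −2a, 2a√c). If (w1, w2, w3) are complex numbers of absolute value 1 with w1 ≠ w2 forming a common zero for these parameters, then w3 = 1 or w3 = w1·w2. -/
/-- The polynomial `e₀` attached to the first eigenmatrix of a nonsymmetric
3-class association scheme with parameters `k1, k2` (it involves neither `r` nor `b`). -/
noncomputable def e0 (k1 k2 : ℝ) (w1 w2 w3 : ℂ) : ℂ :=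
  (1 + ((k1 : ℂ)/2)*(w1+w2) + (k2 : ℂ)*w3) *
    (w1*w2*w3 + ((k1 : ℂ)/2)*(w1+w2)*w3 + (k2 : ℂ)*w1*w2)
  - ((1 : ℂ) + (k1 : ℂ) + (k2 : ℂ))*w1*w2*w3

/-- The polynomial `e₁` attached to the parameters `k1, k2, r, b`. -/
noncomputable def e1 (k1 k2 r b : ℝ) (w1 w2 w3 : ℂ) : ℂ :=
  (1 + (((r : ℂ) + (b : ℂ)*Complex.I)/2)*w1 + (((r : ℂ) - (b : ℂ)*Complex.I)/2)*w2
      - ((r : ℂ)+1)*w3) *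
    (w1*w2*w3 + ((((r : ℂ) + (b : ℂ)*Complex.I)/2)*w1
        + (((r : ℂ) - (b : ℂ)*Complex.I)/2)*w2)*w3 - ((r : ℂ)+1)*w1*w2)
  - ((1 : ℂ) + (k1 : ℂ) + (k2 : ℂ))*w1*w2*w3

/-- The polynomial `e₂` attached to the parameters `k1, k2, r, b`. -/
noncomputable def e2 (k1 k2 r b : ℝ) (w1 w2 w3 : ℂ) : ℂ :=
  (1 + (((r : ℂ) - (b : ℂ)*Complex.I)/2)*w1 + (((r : ℂ) + (b : ℂ)*Complex.I)/2)*w2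
      - ((r : ℂ)+1)*w3) *
    (w1*w2*w3 + ((((r : ℂ) - (b : ℂ)*Complex.I)/2)*w1
        + (((r : ℂ) + (b : ℂ)*Complex.I)/2)*w2)*w3 - ((r : ℂ)+1)*w1*w2)
  - ((1 : ℂ) + (k1 : ℂ) + (k2 : ℂ))*w1*w2*w3

/-- The polynomial `e₃` attached to the parameters `k1, k2, s` (it involves neither `r` nor `b`). -/
noncomputable def e3 (k1 k2 s : ℝ) (w1 w2 w3 : ℂ) : ℂ :=
  (1 + ((s : ℂ)/2)*(w1+w2) - ((s : ℂ)+1)*w3) *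
    (w1*w2*w3 + ((s : ℂ)/2)*(w1+w2)*w3 - ((s : ℂ)+1)*w1*w2)
  - ((1 : ℂ) + (k1 : ℂ) + (k2 : ℂ))*w1*w2*w3

/-- `(w1, w2, w3)` is a common zero for the parameters `(k1, k2, r, s, b)` if
`e0 = e1 = e2 = e3 = 0` at `(w1, w2, w3)`. -/
def IsCommonZero (k1 k2 r s b : ℝ) (w1 w2 w3 : ℂ) : Prop :=
  e0 k1 k2 w1 w2 w3 = 0 ∧ e1 k1 k2 r b w1 w2 w3 = 0 ∧
  e2 k1 k2 r b w1 w2 w3 = 0 ∧ e3 k1 k2 s w1 w2 w3 = 0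

/-- Lemma 6 (i) of the paper. -/
theorem stmt8 (a c : ℕ) (ha : 0 < a) (hc : 0 < c) (w1 w2 w3 : ℂ)
    (hw1 : ‖w1‖ = 1) (hw2 : ‖w2‖ = 1) (hw3 : ‖w3‖ = 1)
    (hne : w1 ≠ w2)
    (hz : IsCommonZero (2*(a:ℝ)*(2*(a:ℝ)-1)*(c:ℝ)) (2*(a:ℝ)-1) 0 (-(2*(a:ℝ)))
      (2*(a:ℝ)*Real.sqrt (c:ℝ)) w1 w2 w3) :
    w3 = 1 ∨ w3 = w1*w2 := by
  obtain ⟨_, h1, h2, _⟩ := hz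
  simp only [e1, e2] at h1 h2
  set b : ℝ := 2*(a:ℝ)*Real.sqrt (c:ℝ) with hbdef
  have key : (b:ℂ) * Complex.I * (w1 - w2) * ((w3 - 1) * (w1*w2 - w3)) = 0 := by
    linear_combination (norm := (push_cast; ring_nf)) h1 - h2
  have ha' : (0:ℝ) < (a:ℝ) := by exact_mod_cast ha
  have hc' : (0:ℝ) < Real.sqrt (c:ℝ) := Real.sqrt_pos.mpr (by exact_mod_cast hc)
  have hb : b ≠ 0 := by positivity
  have hbC : (b:ℂ) ≠ 0 := by exact_mod_cast hb
  have hne' : w1 - w2 ≠ 0 := sub_ne_zero.mpr hne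
  have h := key
  rcases mul_eq_zero.mp h with h | h
  · rcases mul_eq_zero.mp h with h | h
    · rcases mul_eq_zero.mp h with h | h
      · exact absurd h hbC
      · exact absurd h Complex.I_ne_zero
    · exact absurd h hne'
  · rcases mul_eq_zero.mp h with h | h
    · exact Or.inl (sub_eq_zero.mp h)
    · exact Or.inr (sub_eq_zero.mp h).symm
end

section
/- Let a and c be positive integers and take the case-(i) parameters (k1,k2,r,s,b) = (2a(2a−1)c, 2a−1, 0, −2a, 2a√c). If (w1, w2, w3) are complex numbers of absolute value 1 with w1 ≠ w2 forming a common zero for these parameters, then w2 = −w1 or g(w1, w2) = 0, where g(w1,w2) = 2(w1·w2 + 1) + ((2a−1)c − 1)·(w1 + w2). -/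
/-- Lemma 6 (ii) of the paper. -/
theorem stmt9 (a c : ℕ) (ha : 0 < a) (hc : 0 < c) (w1 w2 w3 : ℂ)
    (hw1 : ‖w1‖ = 1) (hw2 : ‖w2‖ = 1) (hw3 : ‖w3‖ = 1)
    (hne : w1 ≠ w2)
    (hz : IsCommonZero (2*(a:ℝ)*(2*(a:ℝ)-1)*(c:ℝ)) (2*(a:ℝ)-1) 0 (-(2*(a:ℝ)))
      (2*(a:ℝ)*Real.sqrt (c:ℝ)) w1 w2 w3) :
    w2 = -w1 ∨ 2*(w1*w2 + 1) + ((2*(a:ℂ)-1)*(c:ℂ) - 1)*(w1 + w2) = 0 := by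
  obtain ⟨h0, h1, h2, h3⟩ := hz
  have ha1 : (1:ℝ) ≤ (a:ℝ) := by exact_mod_cast ha
  have hc1 : (1:ℝ) ≤ (c:ℝ) := by exact_mod_cast hc
  -- Step 1: from e1 - e2 = 0 deduce w3 = 1 or w3 = w1*w2
  have key1 : ((2*(a:ℝ)*Real.sqrt (c:ℝ) : ℝ) : ℂ) * Complex.I * (w1 - w2) *
      ((1 - w3) * (w3 - w1*w2)) = 0 := by
    have hid : ((2*(a:ℝ)*Real.sqrt (c:ℝ) : ℝ) : ℂ) * Complex.I * (w1 - w2) *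
        ((1 - w3) * (w3 - w1*w2))
        = e1 (2*(a:ℝ)*(2*(a:ℝ)-1)*(c:ℝ)) (2*(a:ℝ)-1) 0 (2*(a:ℝ)*Real.sqrt (c:ℝ)) w1 w2 w3
          - e2 (2*(a:ℝ)*(2*(a:ℝ)-1)*(c:ℝ)) (2*(a:ℝ)-1) 0 (2*(a:ℝ)*Real.sqrt (c:ℝ)) w1 w2 w3 := by
      simp only [e1, e2]
      push_cast
      ring
    rw [hid, h1, h2, sub_zero]
  have hbne : ((2*(a:ℝ)*Real.sqrt (c:ℝ) : ℝ) : ℂ) ≠ 0 := by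
    have : (0:ℝ) < 2*(a:ℝ)*Real.sqrt (c:ℝ) := by
      have hs : 0 < Real.sqrt (c:ℝ) := Real.sqrt_pos.mpr (by linarith)
      nlinarith
    exact_mod_cast ne_of_gt this
  have hw12 : w1 - w2 ≠ 0 := sub_ne_zero.mpr hne
  have hcases : w3 = 1 ∨ w3 = w1*w2 := by
    rcases mul_eq_zero.mp key1 with h | h
    · rcases mul_eq_zero.mp h with h' | h'
      · exact absurd h' (mul_ne_zero hbne Complex.I_ne_zero)
      · exact absurd h' hw12
    · rcases mul_eq_zero.mp h with h' | h'
      · exact Or.inl (by linear_combination -h')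
      · exact Or.inr (by linear_combination h')
  -- Step 2: from e0 - e3 = 0 get a factorization
  have key2 : (w1 + w2) * ((a:ℂ) * ((2*(a:ℂ)-1)*(c:ℂ) + 1)) *
      ((w1*w2+1)*w3 + (2*(a:ℂ)-1)*(w1*w2 + w3^2)
        + (a:ℂ)*((2*(a:ℂ)-1)*(c:ℂ) - 1)*(w1+w2)*w3) = 0 := by
    have hid : (w1 + w2) * ((a:ℂ) * ((2*(a:ℂ)-1)*(c:ℂ) + 1)) *
        ((w1*w2+1)*w3 + (2*(a:ℂ)-1)*(w1*w2 + w3^2)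
          + (a:ℂ)*((2*(a:ℂ)-1)*(c:ℂ) - 1)*(w1+w2)*w3)
        = e0 (2*(a:ℝ)*(2*(a:ℝ)-1)*(c:ℝ)) (2*(a:ℝ)-1) w1 w2 w3
          - e3 (2*(a:ℝ)*(2*(a:ℝ)-1)*(c:ℝ)) (2*(a:ℝ)-1) (-(2*(a:ℝ))) w1 w2 w3 := by
      simp only [e0, e3]
      push_cast
      ring
    rw [hid, h0, h3, sub_zero]
  have haC : ((a:ℂ) * ((2*(a:ℂ)-1)*(c:ℂ) + 1)) ≠ 0 := by
    have h : (0:ℝ) < (a:ℝ) * ((2*(a:ℝ)-1)*(c:ℝ) + 1) := by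
      nlinarith [mul_pos (by linarith : (0:ℝ) < 2*(a:ℝ)-1) (by linarith : (0:ℝ) < (c:ℝ))]
    have h2 : ((a:ℝ) * ((2*(a:ℝ)-1)*(c:ℝ) + 1) : ℝ) ≠ 0 := ne_of_gt h
    intro hcon
    apply h2
    have : (((a:ℝ) * ((2*(a:ℝ)-1)*(c:ℝ) + 1) : ℝ) : ℂ) = 0 := by push_cast; linear_combination hcon
    exact_mod_cast this
  have hane : (a:ℂ) ≠ 0 := by
    have : ((a:ℝ):ℂ) ≠ 0 := by exact_mod_cast ne_of_gt (lt_of_lt_of_le one_pos ha1)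
    exact_mod_cast this
  have hpne : w1 * w2 ≠ 0 := by
    intro h
    rcases mul_eq_zero.mp h with h' | h' <;> simp [h'] at hw1 hw2
  rcases mul_eq_zero.mp key2 with h | hB
  · rcases mul_eq_zero.mp h with h' | h'
    · exact Or.inl (by linear_combination h')
    · exact absurd h' haC
  · right
    rcases hcases with h3' | h3'
    · subst h3'
      have : (a:ℂ) * (2*(w1*w2 + 1) + ((2*(a:ℂ)-1)*(c:ℂ) - 1)*(w1 + w2)) = 0 := by
        linear_combination hB
      exact (mul_eq_zero.mp this).resolve_left hane
    · subst h3'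
      have : (a:ℂ) * (w1*w2) * (2*(w1*w2 + 1) + ((2*(a:ℂ)-1)*(c:ℂ) - 1)*(w1 + w2)) = 0 := by
        linear_combination hB
      rcases mul_eq_zero.mp this with h | h
      · exact absurd h (mul_ne_zero hane hpne)
      · exact h
end

section
/- Let a and c be positive integers and take the case-(i) parameters (k1,k2,r,s,b) = (2a(2a−1)c, 2a−1, 0, −2a, 2a√c). If (w1, w2, w3) are complex numbers of absolute value 1 with w1 ≠ w2 forming a common zero for these parameters and w1·w2 = 1, then w2 = −w1 and w1 = i or w1 = −i (where i is the imaginary unit). -/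
lemma keyLem (α β n g : ℝ) (w3 : ℂ) (h3 : w3 ≠ 0)
    (hq : w3^2 - 2*(g:ℂ)*w3 + 1 = 0)
    (he : ((α:ℂ) + (β:ℂ)*w3) * ((α:ℂ)*w3 + (β:ℂ)) - (n:ℂ)*w3 = 0) :
    α^2 + 2*α*β*g + β^2 - n = 0 := by
  have h : ((α^2 + 2*α*β*g + β^2 - n : ℝ) : ℂ) * w3 = 0 := by
    push_cast
    linear_combination he - (α:ℂ)*(β:ℂ)*hq
  rcases mul_eq_zero.mp h with h' | h'
  · exact_mod_cast h'
  · exact absurd h' h3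

lemma convLem (q1 q2 q3 mc nc w1 w2 w3 : ℂ) (h12 : w1*w2 = 1)
    (hm : q1*w1 + q2*w2 = mc) :
    (1 + q1*w1 + q2*w2 + q3*w3)*(w1*w2*w3 + (q1*w1 + q2*w2)*w3 + q3*(w1*w2)) - nc*(w1*w2*w3)
      = (1 + mc + q3*w3)*((1 + mc)*w3 + q3) - nc*w3 := by
  linear_combination (w1*w2*w3 + (q1*w1+q2*w2)*w3 + q3*(w1*w2) + (1+mc+q3*w3)*w3)*hm
    + ((1+mc+q3*w3)*(w3+q3) - nc*w3)*h12



set_option maxHeartbeats 1000000 in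
/-- Lemma 6 (iii) of the paper. -/
theorem stmt10 (a c : ℕ) (ha : 0 < a) (hc : 0 < c) (w1 w2 w3 : ℂ)
    (hw1 : ‖w1‖ = 1) (hw2 : ‖w2‖ = 1) (hw3 : ‖w3‖ = 1)
    (hne : w1 ≠ w2)
    (hz : IsCommonZero (2*(a:ℝ)*(2*(a:ℝ)-1)*(c:ℝ)) (2*(a:ℝ)-1) 0 (-(2*(a:ℝ)))
      (2*(a:ℝ)*Real.sqrt (c:ℝ)) w1 w2 w3)
    (h12 : w1 * w2 = 1) :
    w2 = -w1 ∧ (w1 = Complex.I ∨ w1 = -Complex.I) := by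
  obtain ⟨h0, h1, h2, h3e⟩ := hz
  unfold e0 at h0
  unfold e1 at h1
  unfold e2 at h2
  unfold e3 at h3e
  have hw1ne : w1 ≠ 0 := by
    intro h; rw [h] at hw1; simp at hw1
  have hw3ne : w3 ≠ 0 := by
    intro h; rw [h] at hw3; simp at hw3
  have hw2c : w2 = (starRingEnd ℂ) w1 := by
    have hmc : w1 * (starRingEnd ℂ) w1 = 1 := by
      rw [Complex.mul_conj, Complex.normSq_eq_norm_sq, hw1]; norm_num
    exact mul_left_cancel₀ hw1ne (h12.trans hmc.symm)
  have hS : w1 + w2 = 2*((w1.re:ℝ):ℂ) := by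
    rw [hw2c, Complex.add_conj]; push_cast; ring
  have hD : w1 - w2 = 2*((w1.im:ℝ):ℂ)*Complex.I := by
    rw [hw2c, Complex.sub_conj]; push_cast; ring
  have hq3 : w3^2 - 2*((w3.re:ℝ):ℂ)*w3 + 1 = 0 := by
    have hmc : w3 * (starRingEnd ℂ) w3 = 1 := by
      rw [Complex.mul_conj, Complex.normSq_eq_norm_sq, hw3]; norm_num
    have hac : w3 + (starRingEnd ℂ) w3 = 2*((w3.re:ℝ):ℂ) := by
      rw [Complex.add_conj]; push_cast; ring
    linear_combination w3*hac - hmc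
  have hxy : w1.re^2 + w1.im^2 = 1 := by
    have h := Complex.normSq_apply w1
    rw [Complex.normSq_eq_norm_sq, hw1] at h
    linear_combination -h
  set x := w1.re with hxdef
  set y := w1.im with hydef
  set g := w3.re with hgdef
  have hy0 : y ≠ 0 := by
    intro hy
    exact hne ((Complex.conj_eq_iff_im.mpr hy).symm ▸ hw2c.symm ▸ rfl)
  have hc0 : (0:ℝ) ≤ (c:ℝ) := Nat.cast_nonneg c
  have hsq : Real.sqrt (c:ℝ)^2 = (c:ℝ) := Real.sq_sqrt hc0
  have ha1 : (1:ℝ) ≤ (a:ℝ) := by exact_mod_cast ha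
  have hc1 : (1:ℝ) ≤ (c:ℝ) := by exact_mod_cast hc
  have hsp : 0 < Real.sqrt (c:ℝ) := Real.sqrt_pos.mpr (by linarith)
  push_cast at h0 h1 h2 h3e
  -- the four real equations
  have hm0 : (2*(a:ℂ)*(2*(a:ℂ)-1)*(c:ℂ)/2)*w1 + (2*(a:ℂ)*(2*(a:ℂ)-1)*(c:ℂ)/2)*w2
      = 2*(a:ℂ)*(2*(a:ℂ)-1)*(c:ℂ)*(x:ℂ) := by
    linear_combination (2*(a:ℂ)*(2*(a:ℂ)-1)*(c:ℂ)/2)*hS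
  have E0 : (1 + 2*(a:ℝ)*(2*(a:ℝ)-1)*(c:ℝ)*x)^2
      + 2*(1 + 2*(a:ℝ)*(2*(a:ℝ)-1)*(c:ℝ)*x)*(2*(a:ℝ)-1)*g + (2*(a:ℝ)-1)^2
      - (1 + 2*(a:ℝ)*(2*(a:ℝ)-1)*(c:ℝ) + (2*(a:ℝ)-1)) = 0 := by
    apply keyLem _ _ _ _ w3 hw3ne hq3
    push_cast
    linear_combination h0 - convLem (2*(a:ℂ)*(2*(a:ℂ)-1)*(c:ℂ)/2) (2*(a:ℂ)*(2*(a:ℂ)-1)*(c:ℂ)/2)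
      (2*(a:ℂ)-1) (2*(a:ℂ)*(2*(a:ℂ)-1)*(c:ℂ)*(x:ℂ))
      (1 + 2*(a:ℂ)*(2*(a:ℂ)-1)*(c:ℂ) + (2*(a:ℂ)-1)) w1 w2 w3 h12 hm0
  have hm1 : ((2*(a:ℂ)*((Real.sqrt (c:ℝ):ℝ):ℂ))*Complex.I/2)*w1
      + (-((2*(a:ℂ)*((Real.sqrt (c:ℝ):ℝ):ℂ))*Complex.I/2))*w2
      = -((2*(a:ℂ)*((Real.sqrt (c:ℝ):ℝ):ℂ))*(y:ℂ)) := by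
    linear_combination ((2*(a:ℂ)*((Real.sqrt (c:ℝ):ℝ):ℂ))*Complex.I/2)*hD
      + (2*(a:ℂ)*((Real.sqrt (c:ℝ):ℝ):ℂ))*(y:ℂ)*Complex.I_sq
  have E1 : (1 - 2*(a:ℝ)*Real.sqrt (c:ℝ)*y)^2
      + 2*(1 - 2*(a:ℝ)*Real.sqrt (c:ℝ)*y)*(-1)*g + (-1:ℝ)^2
      - (1 + 2*(a:ℝ)*(2*(a:ℝ)-1)*(c:ℝ) + (2*(a:ℝ)-1)) = 0 := by
    apply keyLem _ _ _ _ w3 hw3ne hq3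
    push_cast
    linear_combination h1 - convLem ((2*(a:ℂ)*((Real.sqrt (c:ℝ):ℝ):ℂ))*Complex.I/2)
      (-((2*(a:ℂ)*((Real.sqrt (c:ℝ):ℝ):ℂ))*Complex.I/2)) (-1)
      (-((2*(a:ℂ)*((Real.sqrt (c:ℝ):ℝ):ℂ))*(y:ℂ)))
      (1 + 2*(a:ℂ)*(2*(a:ℂ)-1)*(c:ℂ) + (2*(a:ℂ)-1)) w1 w2 w3 h12 hm1
  have hm2 : (-((2*(a:ℂ)*((Real.sqrt (c:ℝ):ℝ):ℂ))*Complex.I/2))*w1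
      + ((2*(a:ℂ)*((Real.sqrt (c:ℝ):ℝ):ℂ))*Complex.I/2)*w2
      = (2*(a:ℂ)*((Real.sqrt (c:ℝ):ℝ):ℂ))*(y:ℂ) := by
    linear_combination (-((2*(a:ℂ)*((Real.sqrt (c:ℝ):ℝ):ℂ))*Complex.I/2))*hD
      - (2*(a:ℂ)*((Real.sqrt (c:ℝ):ℝ):ℂ))*(y:ℂ)*Complex.I_sq
  have E2 : (1 + 2*(a:ℝ)*Real.sqrt (c:ℝ)*y)^2
      + 2*(1 + 2*(a:ℝ)*Real.sqrt (c:ℝ)*y)*(-1)*g + (-1:ℝ)^2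
      - (1 + 2*(a:ℝ)*(2*(a:ℝ)-1)*(c:ℝ) + (2*(a:ℝ)-1)) = 0 := by
    apply keyLem _ _ _ _ w3 hw3ne hq3
    push_cast
    linear_combination h2 - convLem (-((2*(a:ℂ)*((Real.sqrt (c:ℝ):ℝ):ℂ))*Complex.I/2))
      ((2*(a:ℂ)*((Real.sqrt (c:ℝ):ℝ):ℂ))*Complex.I/2) (-1)
      ((2*(a:ℂ)*((Real.sqrt (c:ℝ):ℝ):ℂ))*(y:ℂ))
      (1 + 2*(a:ℂ)*(2*(a:ℂ)-1)*(c:ℂ) + (2*(a:ℂ)-1)) w1 w2 w3 h12 hm2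
  have hm3 : (-(2*(a:ℂ))/2)*w1 + (-(2*(a:ℂ))/2)*w2 = -(2*(a:ℂ))*(x:ℂ) := by
    linear_combination (-(2*(a:ℂ))/2)*hS
  have E3 : (1 - 2*(a:ℝ)*x)^2 + 2*(1 - 2*(a:ℝ)*x)*(2*(a:ℝ)-1)*g + (2*(a:ℝ)-1)^2
      - (1 + 2*(a:ℝ)*(2*(a:ℝ)-1)*(c:ℝ) + (2*(a:ℝ)-1)) = 0 := by
    apply keyLem _ _ _ _ w3 hw3ne hq3
    push_cast
    linear_combination h3e - convLem (-(2*(a:ℂ))/2) (-(2*(a:ℂ))/2) (2*(a:ℂ)-1)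
      (-(2*(a:ℂ))*(x:ℂ))
      (1 + 2*(a:ℂ)*(2*(a:ℂ)-1)*(c:ℂ) + (2*(a:ℂ)-1)) w1 w2 w3 h12 hm3
  -- real reasoning
  have hby : 2*(a:ℝ)*Real.sqrt (c:ℝ)*(y*(1-g)) = 0 := by
    linear_combination (-(1:ℝ)/4)*E1 + ((1:ℝ)/4)*E2
  have hBpos : 0 < 2*(a:ℝ)*Real.sqrt (c:ℝ) := by nlinarith [hsp, ha1]
  have hg1 : g = 1 := by
    rcases mul_eq_zero.mp hby with h | h
    · exact absurd h (ne_of_gt hBpos)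
    · rcases mul_eq_zero.mp h with h' | h'
      · exact absurd h' hy0
      · linarith
  have h2A : (2*(a:ℝ)) ≠ 0 := by positivity
  have hy2 : 2*(a:ℝ)*(c:ℝ)*y^2 = 1+(2*(a:ℝ)-1)*(c:ℝ) := by
    apply mul_left_cancel₀ h2A
    linear_combination E1 - 4*(a:ℝ)^2*y^2*hsq + 2*(1-2*(a:ℝ)*Real.sqrt (c:ℝ)*y)*hg1
  have hx3 : 2*(a:ℝ)*(1-x)^2 = 1+(2*(a:ℝ)-1)*(c:ℝ) := by
    apply mul_left_cancel₀ h2A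
    linear_combination E3 - 2*(1-2*(a:ℝ)*x)*(2*(a:ℝ)-1)*hg1
  have hx0 : 2*(a:ℝ)*(1+(2*(a:ℝ)-1)*(c:ℝ)*x)^2 = 1+(2*(a:ℝ)-1)*(c:ℝ) := by
    apply mul_left_cancel₀ h2A
    linear_combination E0 - 2*(1+2*(a:ℝ)*(2*(a:ℝ)-1)*(c:ℝ)*x)*(2*(a:ℝ)-1)*hg1
  have hsqx : (1-x)^2 = (1+(2*(a:ℝ)-1)*(c:ℝ)*x)^2 := by
    apply mul_left_cancel₀ h2A
    linear_combination hx3 - hx0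
  have hfact : x*((1+(2*(a:ℝ)-1)*(c:ℝ))*(2+((2*(a:ℝ)-1)*(c:ℝ)-1)*x)) = 0 := by
    linear_combination -hsqx
  have hKpos : (0:ℝ) < 1+(2*(a:ℝ)-1)*(c:ℝ) := by nlinarith [ha1, hc1]
  rcases mul_eq_zero.mp hfact with hx | hrest
  · -- good case : x = 0
    have hre : w1.re = 0 := by rw [← hxdef]; exact hx
    have hy2v : y^2 = 1 := by rw [hx] at hxy; linarith
    constructor
    · rw [hw2c]
      apply Complex.ext
      · rw [Complex.conj_re, Complex.neg_re, hre]; norm_num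
      · rw [Complex.conj_im, Complex.neg_im]
    · have hfy : (y-1)*(y+1) = 0 := by linear_combination hy2v
      rcases mul_eq_zero.mp hfy with h | h
      · left
        apply Complex.ext
        · rw [hre, Complex.I_re]
        · rw [Complex.I_im, ← hydef]; linarith
      · right
        apply Complex.ext
        · rw [hre, Complex.neg_re, Complex.I_re]; norm_num
        · rw [Complex.neg_im, Complex.I_im, ← hydef]; linarith
  · exfalso
    have h2Kx : 2+((2*(a:ℝ)-1)*(c:ℝ)-1)*x = 0 := by
      rcases mul_eq_zero.mp hrest with h | h
      · exact absurd h (ne_of_gt hKpos)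
      · exact h
    have hx1 : x ≠ 1 := by
      intro h
      rw [h] at hxy
      have : y^2 = 0 := by linarith
      exact hy0 (by
        have := sq_eq_zero_iff.mp this
        exact this)
    have h5 : ((1-x)*((c:ℝ)*(1+x) - (1-x))) * (2*(a:ℝ)) = 0 := by
      linear_combination hy2 - hx3 - 2*(a:ℝ)*(c:ℝ)*hxy
    have hcx : (c:ℝ)*(1+x) - (1-x) = 0 := by
      rcases mul_eq_zero.mp h5 with h | h
      · rcases mul_eq_zero.mp h with h' | h'
        · exact absurd (by linarith : x = 1) hx1
        · exact h'
      · exact absurd h h2A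
    have hKC : ((2*(a:ℝ)-1)*(c:ℝ))*((c:ℝ)-1) = 3*(c:ℝ)+1 := by
      linear_combination (-((c:ℝ)+1))*h2Kx + ((2*(a:ℝ)-1)*(c:ℝ)-1)*hcx
    have h2a : (1:ℕ) ≤ 2*a := by omega
    have hcast : ((2*a-1:ℕ):ℝ) * (c:ℝ) * (((c-1:ℕ)):ℝ) = 3*(c:ℝ)+1 := by
      rw [Nat.cast_sub h2a, Nat.cast_sub hc]
      push_cast
      linear_combination hKC
    have hNat : (2*a-1)*c*(c-1) = 3*c+1 := by exact_mod_cast hcast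
    have hdvd : c ∣ 3*c+1 := by rw [← hNat]; exact ⟨(2*a-1)*(c-1), by ring⟩
    have hc1' : c = 1 := Nat.dvd_one.mp ((Nat.dvd_add_right ⟨3, by ring⟩).mp hdvd)
    rw [hc1'] at hNat
    omega
end

section
/- Let a and c be positive integers and take the case-(i) parameters (k1,k2,r,s,b) = (2a(2a−1)c, 2a−1, 0, −2a, 2a√c). If (w1, w2, w3) are complex numbers of absolute value 1 with w1 ≠ w2 forming a common zero for these parameters, and if w2 = −w1, then c = 1 and w3 = 1. -/
/-- Lemma 7 of the paper. -/
theorem stmt11 (a c : ℕ) (ha : 0 < a) (hc : 0 < c) (w1 w2 w3 : ℂ)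
    (hw1 : ‖w1‖ = 1) (hw2 : ‖w2‖ = 1) (hw3 : ‖w3‖ = 1)
    (hne : w1 ≠ w2)
    (hz : IsCommonZero (2*(a:ℝ)*(2*(a:ℝ)-1)*(c:ℝ)) (2*(a:ℝ)-1) 0 (-(2*(a:ℝ)))
      (2*(a:ℝ)*Real.sqrt (c:ℝ)) w1 w2 w3)
    (h21 : w2 = -w1) :
    c = 1 ∧ w3 = 1 := by
  obtain ⟨-, he1, he2, -⟩ := hz
  subst h21
  simp only [e1, e2] at he1 he2
  have hw1ne : w1 ≠ 0 := by
    intro h; rw [h] at hw1; simp at hw1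
  have hs : ((Real.sqrt (c:ℝ) : ℝ) : ℂ)^2 = (c:ℂ) := by
    rw [← Complex.ofReal_pow, Real.sq_sqrt (by positivity)]; norm_cast
  have hI : Complex.I^2 = -1 := Complex.I_sq
  push_cast at he1 he2
  have key : (1 - w3)^2 + 2*(a:ℂ)*(1-(c:ℂ))*w3 = 0 := by
    have h2 : 2*w1^2*((1 - w3)^2 + 2*(a:ℂ)*(1-(c:ℂ))*w3) = 0 := by
      linear_combination he1 + he2 - 2*w1^2*w3*4*(a:ℂ)^2*Complex.I^2*hs
        - 2*w1^2*w3*4*(a:ℂ)^2*(c:ℂ)*hI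
    have hne2 : (2:ℂ)*w1^2 ≠ 0 := by
      exact mul_ne_zero two_ne_zero (pow_ne_zero _ hw1ne)
    exact (mul_eq_zero.mp h2).resolve_left hne2
  have hmc : w3 * (starRingEnd ℂ) w3 = 1 := by
    rw [Complex.mul_conj]
    rw [Complex.normSq_eq_norm_sq, hw3]; norm_num
  have hsum : w3 + (starRingEnd ℂ) w3 = 2 + 2*(a:ℂ)*((c:ℂ)-1) := by
    linear_combination (starRingEnd ℂ) w3 * key + (2 - w3 - 2*(a:ℂ)*(1-(c:ℂ))) * hmc
  have hre : 2*w3.re = 2 + 2*(a:ℝ)*((c:ℝ)-1) := by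
    rw [Complex.add_conj] at hsum
    exact_mod_cast hsum
  have hre_le : w3.re ≤ 1 := hw3 ▸ Complex.re_le_norm w3
  have ha1 : (1:ℝ) ≤ (a:ℝ) := by exact_mod_cast ha
  have hc1 : (1:ℝ) ≤ (c:ℝ) := by exact_mod_cast hc
  have hcr : (c:ℝ) = 1 := by nlinarith
  have hre1 : w3.re = 1 := by nlinarith
  have habs2 : w3.re^2 + w3.im^2 = 1 := by
    have h := Complex.sq_norm w3
    rw [hw3] at h
    simpa [Complex.normSq_apply, sq] using h.symm
  have him : w3.im = 0 := by nlinarith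
  refine ⟨by exact_mod_cast hcr, Complex.ext (by simpa using hre1) (by simpa using him)⟩
end

section
/- Let a and c be positive integers and take the case-(i) parameters (k1,k2,r,s,b) = (2a(2a−1)c, 2a−1, 0, −2a, 2a√c). If (w1, w2, w3) are complex numbers of absolute value 1 with w1 ≠ w2 forming a common zero for these parameters, and if w2 ≠ −w1 and moreover w1 = −1 or w2 = −1, then (a,c) = (2,1) or (a,c) = (1,3). -/
private lemma swap_zero {k1 k2 r s b : ℝ} {w1 w2 w3 : ℂ}
    (h : IsCommonZero k1 k2 r s b w1 w2 w3) : IsCommonZero k1 k2 r s b w2 w1 w3 := by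
  obtain ⟨h0, h1, h2, h3⟩ := h
  refine ⟨?_, ?_, ?_, ?_⟩
  · simp only [e0] at h0 ⊢; linear_combination h0
  · simp only [e2] at h2; simp only [e1]; linear_combination h2
  · simp only [e1] at h1; simp only [e2]; linear_combination h1
  · simp only [e3] at h3 ⊢; linear_combination h3

private lemma core_lemma (a c : ℕ) (ha : 0 < a) (hc : 0 < c) (u v : ℂ)
    (hu0 : u ≠ 0) (hu1 : u ≠ 1) (hum1 : u ≠ -1)
    (hz : IsCommonZero (2*(a:ℝ)*(2*(a:ℝ)-1)*(c:ℝ)) (2*(a:ℝ)-1) 0 (-(2*(a:ℝ)))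
      (2*(a:ℝ)*Real.sqrt (c:ℝ)) (-1) u v) :
    (a = 2 ∧ c = 1) ∨ (a = 1 ∧ c = 3) := by
  obtain ⟨h0, h1, h2, h3⟩ := hz
  simp only [e0, e1, e2, e3] at h0 h1 h2 h3
  push_cast at h0 h1 h2 h3
  have hs : (Real.sqrt (c:ℝ) : ℂ)^2 = (c:ℂ) := by
    rw [← Complex.ofReal_pow, Real.sq_sqrt (by positivity)]
    norm_cast
  have hI : (Complex.I)^2 = -1 := Complex.I_sq
  have ha0 : (a:ℂ) ≠ 0 := Nat.cast_ne_zero.2 ha.ne'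
  have hS0 : (Real.sqrt (c:ℝ) : ℂ) ≠ 0 := by
    rw [Complex.ofReal_ne_zero]
    exact ne_of_gt (Real.sqrt_pos.2 (by positivity))
  have hc0 : (c:ℂ) ≠ 0 := Nat.cast_ne_zero.2 hc.ne'
  have h1u : (1:ℂ) + u ≠ 0 := fun h => hum1 (by linear_combination h)
  have h2a1 : (2*(a:ℂ) - 1) ≠ 0 := by
    have : ((2*a - 1 : ℕ) : ℂ) ≠ 0 := Nat.cast_ne_zero.2 (by omega)
    rwa [Nat.cast_sub (by omega), Nat.cast_mul, Nat.cast_ofNat, Nat.cast_one] at this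
  have hfin : (2*(a:ℂ) - 1) * c = 3 → (a = 2 ∧ c = 1) ∨ (a = 1 ∧ c = 3) := by
    intro h
    have hnat : (2*a - 1) * c = 3 := by
      have : (((2*a - 1) * c : ℕ) : ℂ) = ((3:ℕ) : ℂ) := by
        push_cast [Nat.cast_sub (by omega : 1 ≤ 2*a)]
        linear_combination h
      exact_mod_cast this
    have hd1 : 2*a - 1 ≤ 3 := Nat.le_of_dvd (by norm_num) ⟨c, hnat.symm⟩
    have hd2 : c ≤ 3 := Nat.le_of_dvd (by norm_num) ⟨2*a - 1, by rw [mul_comm]; exact hnat.symm⟩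
    have haa : a ≤ 2 := by omega
    interval_cases a <;> interval_cases c <;> omega
  have hkey : ((a:ℂ) * (Real.sqrt (c:ℝ) : ℂ) * Complex.I * (1+u)) * ((1-v)*(u+v)) = 0 := by
    linear_combination (h2 - h1)/2
  have hd : (1-v)*(u+v) = 0 :=
    (mul_eq_zero.1 hkey).resolve_left
      (mul_ne_zero (mul_ne_zero (mul_ne_zero ha0 hS0) Complex.I_ne_zero) h1u)
  rcases mul_eq_zero.1 hd with h | h
  · -- v = 1
    have hv : v = 1 := by linear_combination -h
    subst hv
    have hE12 : (2*(a:ℂ) + 2*a*(2*a-1)*c)*u = (a:ℂ)^2*c*(1+u)^2 := by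
      linear_combination (h1 + h2)/2
        + (-(a:ℂ)^2*(Real.sqrt (c:ℝ) : ℂ)^2*(1+u)^2)*hI + ((a:ℂ)^2*(1+u)^2)*hs
    have hT : (2*(a:ℂ)^3*(2*(a:ℂ)-1)*c*u) * (((1:ℂ)-c)*((2*(a:ℂ)-1)*c-3)) = 0 := by
      linear_combination ((a:ℂ)^2*c)*h0
        + ((a:ℂ)*(2*(a:ℂ)-1)*c*((a:ℂ)*(2*(a:ℂ)-1)*c - 2*(a:ℂ)))*hE12
    have hT2 : ((1:ℂ)-c)*((2*(a:ℂ)-1)*c-3) = 0 :=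
      (mul_eq_zero.1 hT).resolve_left
        (mul_ne_zero (mul_ne_zero (mul_ne_zero
          (mul_ne_zero (by norm_num : (2:ℂ) ≠ 0) (pow_ne_zero 3 ha0)) h2a1) hc0) hu0)
    rcases mul_eq_zero.1 hT2 with hc1 | h3c
    · exfalso
      have hc1' : (c:ℂ) = 1 := by linear_combination -hc1
      have hz2 : ((a:ℂ)*(u-1))^2 = 0 := by
        linear_combination (-1:ℂ)*hE12 + (2*(a:ℂ)*(2*(a:ℂ)-1)*u - (a:ℂ)^2*(1+u)^2)*hc1'
      have := (pow_eq_zero_iff (by norm_num : (2:ℕ) ≠ 0)).1 hz2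
      rcases mul_eq_zero.1 this with h' | h'
      · exact ha0 h'
      · exact hu1 (by linear_combination h')
    · exact hfin (by linear_combination h3c)
  · -- v = -u
    have hv : v = -u := by linear_combination h
    subst hv
    have hE12 : ((1:ℂ) + (a:ℂ)^2*c)*u*(1+u)^2 = (2*(a:ℂ) + 2*a*(2*a-1)*c)*u^2 := by
      linear_combination (h1 + h2)/2
        + ((a:ℂ)^2*(Real.sqrt (c:ℝ) : ℂ)^2*u*(1+u)^2)*hI + (-(a:ℂ)^2*u*(1+u)^2)*hs
    have hT : (2*(a:ℂ)^2*u^2*((a:ℂ)*c - a + 2)) * ((2*(a:ℂ)-1)*c-3) = 0 := by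
      linear_combination (-(1+(a:ℂ)^2*c))*h3 + (-((3*(a:ℂ)-1)*((a:ℂ)+1)))*hE12
    have hac : ((a:ℂ)*c - a + 2) ≠ 0 := by
      have hr : ((a:ℝ)*c - a + 2) > 0 := by
        have : (a:ℝ) * 1 ≤ (a:ℝ)*c := by
          apply mul_le_mul_of_nonneg_left _ (by positivity)
          exact_mod_cast hc
        linarith
      have : ((a:ℂ)*c - a + 2) = (((a:ℝ)*c - a + 2 : ℝ) : ℂ) := by push_cast; ring
      rw [this, Complex.ofReal_ne_zero]
      exact ne_of_gt hr
    have hT2 : ((2*(a:ℂ)-1)*c-3) = 0 :=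
      (mul_eq_zero.1 hT).resolve_left
        (mul_ne_zero (mul_ne_zero (mul_ne_zero (by norm_num : (2:ℂ) ≠ 0)
          (pow_ne_zero 2 ha0)) (pow_ne_zero 2 hu0)) hac)
    exact hfin (by linear_combination hT2)

/-- Lemma 8 of the paper. -/
theorem stmt12 (a c : ℕ) (ha : 0 < a) (hc : 0 < c) (w1 w2 w3 : ℂ)
    (hw1 : ‖w1‖ = 1) (hw2 : ‖w2‖ = 1) (hw3 : ‖w3‖ = 1)
    (hne : w1 ≠ w2)
    (hz : IsCommonZero (2*(a:ℝ)*(2*(a:ℝ)-1)*(c:ℝ)) (2*(a:ℝ)-1) 0 (-(2*(a:ℝ)))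
      (2*(a:ℝ)*Real.sqrt (c:ℝ)) w1 w2 w3)
    (h21 : w2 ≠ -w1) (hm1 : w1 = -1 ∨ w2 = -1) :
    (a = 2 ∧ c = 1) ∨ (a = 1 ∧ c = 3) := by
  rcases hm1 with h | h
  · subst h
    exact core_lemma a c ha hc w2 w3
      (fun h0 => by simp [h0] at hw2) (fun h1 => h21 (by simp [h1]))
      (fun hm => hne (by rw [hm])) hz
  · subst h
    exact core_lemma a c ha hc w1 w3
      (fun h0 => by simp [h0] at hw1) (fun h1 => h21 (by simp [h1]))
      (fun hm => hne (by rw [hm])) (swap_zero hz)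
end

section
/- Take the parameters (k1,k2,r,s,b) = (12, 3, 0, −4, 4) (the case-(i) parameters with a = 2, c = 1). If (w1, w2, w3) are complex numbers of absolute value 1 with w1 ≠ w2 forming a common zero for these parameters, and if w2 = −1 and w2 ≠ −w1, then w3 = −w1 and w1 = (3+4i)/5 or w1 = (3−4i)/5. -/
/-- Lemma 9 of the paper (parameters of case (i) with `a = 2`, `c = 1`). -/
theorem stmt13 (w1 w2 w3 : ℂ)
    (hw1 : ‖w1‖ = 1) (hw2 : ‖w2‖ = 1) (hw3 : ‖w3‖ = 1)
    (hne : w1 ≠ w2)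
    (hz : IsCommonZero 12 3 0 (-4) 4 w1 w2 w3)
    (h2 : w2 = -1) (h21 : w2 ≠ -w1) :
    w3 = -w1 ∧ (w1 = (3 + 4*Complex.I)/5 ∨ w1 = (3 - 4*Complex.I)/5) := by
  obtain ⟨hz0, hz1, hz2, hz3⟩ := hz
  subst h2
  have hw1ne1 : w1 ≠ 1 := by
    intro h
    exact h21 (by rw [h])
  have h0 : w1 ≠ 0 := by
    intro h
    rw [h] at hw1
    simp at hw1
  simp only [e0, e1, e2, e3] at hz0 hz1 hz2 hz3
  push_cast at hz0 hz1 hz2 hz3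
  have F1 : (w1 + w3) * (1 - w1) * (1 - w3) = 0 := by
    linear_combination (hz0 - hz3) / 24
  have F2 : (-8)*w3 + 2*w1 + 12*w1*w3 + 2*w1*w3^2 - 8*w1^2*w3 = 0 := by
    linear_combination hz1 + hz2 - (8*w3*(1+w1)^2) * Complex.I_sq
  have hW3 : w3 = -w1 := by
    rcases mul_eq_zero.mp F1 with h | h3
    · rcases mul_eq_zero.mp h with hA | hB
      · linear_combination hA
      · exact absurd (by linear_combination -hB) hw1ne1
    · have hw3 : w3 = 1 := by linear_combination -h3
      subst hw3
      have hsq : (w1 - 1)^2 = 0 := by linear_combination -F2/8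
      have : w1 = 1 := by
        have := pow_eq_zero_iff (n := 2) (by norm_num) |>.mp hsq
        linear_combination this
      exact absurd this hw1ne1
  subst hW3
  refine ⟨rfl, ?_⟩
  have hfac : w1 * ((5*w1 - 3 - 4*Complex.I) * (5*w1 - 3 + 4*Complex.I)) * 2 = 0 := by
    linear_combination 5*F2 - (32*w1) * Complex.I_sq
  have hkey : (5*w1 - 3 - 4*Complex.I) * (5*w1 - 3 + 4*Complex.I) = 0 := by
    have := mul_eq_zero.mp hfac
    rcases this with h | h
    · rcases mul_eq_zero.mp h with h' | h'
      · exact absurd h' h0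
      · exact h'
    · norm_num at h
  rcases mul_eq_zero.mp hkey with h | h
  · left
    field_simp
    linear_combination h
  · right
    field_simp
    linear_combination h
end

section
/- Take the parameters (k1,k2,r,s,b) = (6, 1, 0, −2, 2√3) (the case-(i) parameters with a = 1, c = 3). If (w1, w2, w3) are complex numbers of absolute value 1 with w1 ≠ w2 forming a common zero for these parameters, and if w2 = −1 and w2 ≠ −w1, then either w3 = 1 and w1 = (1+2√2·i)/3 or w1 = (1−2√2·i)/3, or else w3 = −w1 and w1 = i or w1 = −i. -/
/-- Lemma 10 of the paper (parameters of case (i) with `a = 1`, `c = 3`). -/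
theorem stmt14 (w1 w2 w3 : ℂ)
    (hw1 : ‖w1‖ = 1) (hw2 : ‖w2‖ = 1) (hw3 : ‖w3‖ = 1)
    (hne : w1 ≠ w2)
    (hz : IsCommonZero 6 1 0 (-2) (2*Real.sqrt 3) w1 w2 w3)
    (h2 : w2 = -1) (h21 : w2 ≠ -w1) :
    (w3 = 1 ∧ (w1 = (1 + 2*(Real.sqrt 2 : ℂ)*Complex.I)/3
                ∨ w1 = (1 - 2*(Real.sqrt 2 : ℂ)*Complex.I)/3))
    ∨ (w3 = -w1 ∧ (w1 = Complex.I ∨ w1 = -Complex.I)) := by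
  have hI : Complex.I ^ 2 = -1 := Complex.I_sq
  have hT : ((Real.sqrt 3:ℝ):ℂ) ^ 2 = 3 := by
    rw [← Complex.ofReal_pow, Real.sq_sqrt (by norm_num : (0:ℝ) ≤ 3)]; norm_num
  have G1 : w1 * (starRingEnd ℂ) w1 = 1 := by
    rw [Complex.mul_conj, Complex.normSq_eq_norm_sq, hw1]; norm_num
  have G3 : w3 * (starRingEnd ℂ) w3 = 1 := by
    rw [Complex.mul_conj, Complex.normSq_eq_norm_sq, hw3]; norm_num
  subst h2
  obtain ⟨hh0, hh1, hh2, hh3⟩ := hz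
  simp only [e0, e1, e2, e3] at hh0 hh1 hh2 hh3
  push_cast at hh0 hh1 hh2 hh3
  have k0 := congrArg (starRingEnd ℂ) hh0
  have k1 := congrArg (starRingEnd ℂ) hh1
  have k2 := congrArg (starRingEnd ℂ) hh2
  have k3 := congrArg (starRingEnd ℂ) hh3
  simp only [map_sub, map_add, map_mul, map_div₀, map_one, map_zero, map_neg, map_ofNat,
    Complex.conj_ofReal, Complex.conj_I] at k0 k1 k2 k3
  have hA : w3 + (starRingEnd ℂ) w3 = 3*(w1 + (starRingEnd ℂ) w1) := by
    linear_combination (((1:ℂ)/4)*(starRingEnd ℂ) w1*(starRingEnd ℂ) w3)*hh1 + (((1:ℂ)/4)*(starRingEnd ℂ) w1*(starRingEnd ℂ) w3)*hh2 + (((1:ℂ)/4)*w1*w3)*k1 + (((1:ℂ)/4)*w1*w3)*k2 + (((-1:ℂ)/2)*(starRingEnd ℂ) w1*w3*(starRingEnd ℂ) w3*((Real.sqrt 3:ℝ):ℂ)*((Real.sqrt 3:ℝ):ℂ) + ((-1:ℂ)/2)*w1*w3*(starRingEnd ℂ) w3*((Real.sqrt 3:ℝ):ℂ)*((Real.sqrt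 3:ℝ):ℂ) + (-2:ℂ)*w1*(starRingEnd ℂ) w1*w3*(starRingEnd ℂ) w3*((Real.sqrt 3:ℝ):ℂ)*((Real.sqrt 3:ℝ):ℂ) + ((-1:ℂ)/2)*w1*(starRingEnd ℂ) w1*(starRingEnd ℂ) w1*w3*(starRingEnd ℂ) w3*((Real.sqrt 3:ℝ):ℂ)*((Real.sqrt 3:ℝ):ℂ) + ((-1:ℂ)/2)*w1*w1*(starRingEnd ℂ) w1*w3*(starRingEnd ℂ) w3*((Real.sqrt 3:ℝ):ℂ)*((Real.sqrt 3:ℝ):ℂ))*hI + (((1:ℂ)/2)*(starRingEnd ℂ) w1*w3*(starRingEnd ℂ) w3 + ((1:ℂ)/2)*w1*w3*(starRingEnd ℂ) w3 + (2:ℂ)*w1*(starRingEnd ℂ) w1*w3*(starRingEnd ℂ) w3 + ((1:ℂ)/2)*w1*(starRingEnd ℂ) w1*(starRingEnd ℂ) w1*w3*(starRingEnd ℂ) w3 + ((1:ℂ)/2)*w1*w1*(starRingEnd ℂ) w1*w3*(starRingEnd ℂ) w3)*hT + (((-1:ℂ)/2)*(starRingEnd ℂ) w3 + ((-1:ℂ)/2)*w3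 + ((-1:ℂ)/2)*w3*(starRingEnd ℂ) w3*(starRingEnd ℂ) w3 + ((-1:ℂ)/2)*w3*w3*(starRingEnd ℂ) w3 + ((3:ℂ)/2)*(starRingEnd ℂ) w1*w3*(starRingEnd ℂ) w3 + ((3:ℂ)/2)*w1*w3*(starRingEnd ℂ) w3)*G1 + (((-1:ℂ)/2)*(starRingEnd ℂ) w3 + ((-1:ℂ)/2)*w3 + (3:ℂ)*(starRingEnd ℂ) w1 + (3:ℂ)*w1)*G3
  have hCt : ((Real.sqrt 3:ℝ):ℂ) * ((w3 - (starRingEnd ℂ) w3)*(2+(w1 + (starRingEnd ℂ) w1))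
      + (w1 - (starRingEnd ℂ) w1)*(2-(w3 + (starRingEnd ℂ) w3))) = 0 := by
    linear_combination (((1:ℂ)/2)*(starRingEnd ℂ) w1*(starRingEnd ℂ) w3*Complex.I)*hh1 + (((-1:ℂ)/2)*(starRingEnd ℂ) w1*(starRingEnd ℂ) w3*Complex.I)*hh2 + (((1:ℂ)/2)*w1*w3*Complex.I)*k1 + (((-1:ℂ)/2)*w1*w3*Complex.I)*k2 + ((-1:ℂ)*(starRingEnd ℂ) w1*w3*(starRingEnd ℂ) w3*((Real.sqrt 3:ℝ):ℂ) + (1:ℂ)*(starRingEnd ℂ) w1*w3*w3*(starRingEnd ℂ) w3*((Real.sqrt 3:ℝ):ℂ) + (1:ℂ)*w1*w3*(starRingEnd ℂ) w3*((Real.sqrt 3:ℝ):ℂ) + (-1:ℂ)*w1*w3*(starRingEnd ℂ) w3*(starRingEnd ℂ) w3*((Real.sqrt 3:ℝ):ℂ) + (-1:ℂ)*w1*(starRingEnd ℂ) w1*(starRingEnd ℂ) w3*((Real.sqrt 3:ℝ):ℂ) + (1:ℂ)*w1*(starRingEnd ℂ) w1*w3*((Real.sqrt 3:ℝ):ℂ)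 + (-1:ℂ)*w1*(starRingEnd ℂ) w1*w3*(starRingEnd ℂ) w3*(starRingEnd ℂ) w3*((Real.sqrt 3:ℝ):ℂ) + (1:ℂ)*w1*(starRingEnd ℂ) w1*w3*w3*(starRingEnd ℂ) w3*((Real.sqrt 3:ℝ):ℂ) + (1:ℂ)*w1*(starRingEnd ℂ) w1*(starRingEnd ℂ) w1*w3*((Real.sqrt 3:ℝ):ℂ) + (-1:ℂ)*w1*(starRingEnd ℂ) w1*(starRingEnd ℂ) w1*w3*(starRingEnd ℂ) w3*((Real.sqrt 3:ℝ):ℂ) + (-1:ℂ)*w1*w1*(starRingEnd ℂ) w1*(starRingEnd ℂ) w3*((Real.sqrt 3:ℝ):ℂ) + (1:ℂ)*w1*w1*(starRingEnd ℂ) w1*w3*(starRingEnd ℂ) w3*((Real.sqrt 3:ℝ):ℂ))*hI + ((1:ℂ)*(starRingEnd ℂ) w3*((Real.sqrt 3:ℝ):ℂ) + (-1:ℂ)*w3*((Real.sqrt 3:ℝ):ℂ) + (1:ℂ)*w3*(starRingEnd ℂ) w3*(starRingEnd ℂ) w3*((Real.sqrt 3:ℝ):ℂ) + (-1:ℂ)*w3*w3*(starRingEnd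 ℂ) w3*((Real.sqrt 3:ℝ):ℂ) + (-1:ℂ)*(starRingEnd ℂ) w1*w3*((Real.sqrt 3:ℝ):ℂ) + (1:ℂ)*(starRingEnd ℂ) w1*w3*(starRingEnd ℂ) w3*((Real.sqrt 3:ℝ):ℂ) + (1:ℂ)*w1*(starRingEnd ℂ) w3*((Real.sqrt 3:ℝ):ℂ) + (-1:ℂ)*w1*w3*(starRingEnd ℂ) w3*((Real.sqrt 3:ℝ):ℂ))*G1 + ((1:ℂ)*(starRingEnd ℂ) w3*((Real.sqrt 3:ℝ):ℂ) + (-1:ℂ)*w3*((Real.sqrt 3:ℝ):ℂ) + (2:ℂ)*(starRingEnd ℂ) w1*((Real.sqrt 3:ℝ):ℂ) + (-1:ℂ)*(starRingEnd ℂ) w1*w3*((Real.sqrt 3:ℝ):ℂ) + (-2:ℂ)*w1*((Real.sqrt 3:ℝ):ℂ) + (1:ℂ)*w1*(starRingEnd ℂ) w3*((Real.sqrt 3:ℝ):ℂ))*G3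
  have hB0 : 3*(w1 + (starRingEnd ℂ) w1)*(w3 + (starRingEnd ℂ) w3) - 8*(w3 + (starRingEnd ℂ) w3)
      - 3*(w1 - (starRingEnd ℂ) w1)*(w3 - (starRingEnd ℂ) w3) + 12 = 0 := by
    linear_combination (((-1:ℂ)/2)*(starRingEnd ℂ) w1*(starRingEnd ℂ) w3)*hh0 + (((3:ℂ)/2)*(starRingEnd ℂ) w1*(starRingEnd ℂ) w3)*hh3 + (((-1:ℂ)/2)*w1*w3)*k0 + (((3:ℂ)/2)*w1*w3)*k3 + ((4:ℂ)*(starRingEnd ℂ) w3 + (4:ℂ)*w3 + (-12:ℂ)*w3*(starRingEnd ℂ) w3 + (4:ℂ)*w3*(starRingEnd ℂ) w3*(starRingEnd ℂ) w3 + (4:ℂ)*w3*w3*(starRingEnd ℂ) w3 + (-3:ℂ)*(starRingEnd ℂ) w1*w3 + (-3:ℂ)*w1*(starRingEnd ℂ) w3)*G1 + ((-12:ℂ) + (4:ℂ)*(starRingEnd ℂ) w3 + (4:ℂ)*w3 + (-3:ℂ)*(starRingEnd ℂ) w1*w3 + (-3:ℂ)*w1*(starRingEnd ℂ) w3)*G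3
  have snz : ((Real.sqrt 3:ℝ):ℂ) ≠ 0 := Complex.ofReal_ne_zero.mpr (by positivity)
  have hC : (w3 - (starRingEnd ℂ) w3)*(2+(w1 + (starRingEnd ℂ) w1))
      + (w1 - (starRingEnd ℂ) w1)*(2-(w3 + (starRingEnd ℂ) w3)) = 0 :=
    (mul_eq_zero.mp hCt).resolve_left snz
  have hD : 3*((w1 - (starRingEnd ℂ) w1)*(w3 - (starRingEnd ℂ) w3))
      = 9*(w1 + (starRingEnd ℂ) w1)^2 - 24*(w1 + (starRingEnd ℂ) w1) + 12 := by
    linear_combination (-1:ℂ)*hB0 + (3*(w1 + (starRingEnd ℂ) w1) - 8)*hA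
  have hE : (w3 - (starRingEnd ℂ) w3)^2 = 9*(w1 + (starRingEnd ℂ) w1)^2 - 4 := by
    linear_combination ((w3 + (starRingEnd ℂ) w3) + 3*(w1 + (starRingEnd ℂ) w1))*hA - (4:ℂ)*G3
  have hK : (w1 + (starRingEnd ℂ) w1) * (3*(w1 + (starRingEnd ℂ) w1) - 2) = 0 := by
    linear_combination ((1:ℂ)/16)*(w3 - (starRingEnd ℂ) w3)*hC
      + ((-1:ℂ)/16)*(2+(w1 + (starRingEnd ℂ) w1))*hE
      + ((-1:ℂ)/48)*(2-(w3 + (starRingEnd ℂ) w3))*hD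
      + (((3:ℂ)/16)*(w1 + (starRingEnd ℂ) w1)^2 - ((1:ℂ)/2)*(w1 + (starRingEnd ℂ) w1) + (1:ℂ)/4)*hA
  rcases mul_eq_zero.mp hK with hS | hS2
  · right
    have hZ : w3 + (starRingEnd ℂ) w3 = 0 := by linear_combination hA + (3:ℂ)*hS
    have hz3 : w3 = -w1 := by
      linear_combination ((1:ℂ)/4)*hC - ((1:ℂ)/4)*(w3 - (starRingEnd ℂ) w3 - 2)*hS
        - ((1:ℂ)/4)*(-(w1 - (starRingEnd ℂ) w1) - 2)*hZ
    refine ⟨hz3, ?_⟩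
    have hx2 : w1^2 = -1 := by linear_combination w1*hS - G1
    have hf : (w1 - Complex.I)*(w1 + Complex.I) = 0 := by linear_combination hx2 - hI
    rcases mul_eq_zero.mp hf with h | h
    · exact Or.inl (sub_eq_zero.mp h)
    · exact Or.inr (eq_neg_of_add_eq_zero_left h)
  · left
    have hZ2 : w3 + (starRingEnd ℂ) w3 = 2 := by linear_combination hA + hS2
    have hn : (w3 - 1) * (starRingEnd ℂ) (w3 - 1) = 0 := by
      rw [map_sub, map_one]
      linear_combination G3 - hZ2
    rw [Complex.mul_conj] at hn
    have hz3 : w3 = 1 := sub_eq_zero.mp (Complex.normSq_eq_zero.mp (by exact_mod_cast hn))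
    refine ⟨hz3, ?_⟩
    have hr2 : ((Real.sqrt 2:ℝ):ℂ) ^ 2 = 2 := by
      rw [← Complex.ofReal_pow, Real.sq_sqrt (by norm_num : (0:ℝ) ≤ 2)]; norm_num
    have hq : (3*w1 - (1 + 2*(Real.sqrt 2:ℂ)*Complex.I)) * (3*w1 - (1 - 2*(Real.sqrt 2:ℂ)*Complex.I)) = 0 := by
      linear_combination (3*w1)*hS2 + (-9:ℂ)*G1 + (-4*Complex.I^2)*hr2 + (-8:ℂ)*hI
    rcases mul_eq_zero.mp hq with h | h
    · exact Or.inl (by linear_combination ((1:ℂ)/3)*h)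
    · exact Or.inr (by linear_combination ((1:ℂ)/3)*h)
end

section
/- Let k1 be a positive even integer and k2 a positive integer such that k1+1 divides (k1+k2+1)·k1, and take the parameters (k1, k2, r, s, b) = (k1, k2, −1, k1, √(k1+1)). Then there exists no triple (w1, w2, w3) of complex numbers of absolute value 1 with w1 ≠ w2 that is a common zero for these parameters. -/
private lemma key_aux (k1 k2 : ℕ) (hk2 : 0 < k2) (w : ℂ) (habs : ‖w‖ = 1)
    (h : ((k1:ℂ)+2)*(1+w^2) + (2*(k1:ℂ)+4*(k2:ℂ))*w = 0) : k2 = 1 := by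
  have hc : w * (starRingEnd ℂ) w = 1 := by
    rw [Complex.mul_conj]
    rw [Complex.normSq_eq_norm_sq, habs]
    norm_num
  have h2 : ((k1:ℂ)+2)*(w + (starRingEnd ℂ) w) + (2*(k1:ℂ)+4*(k2:ℂ)) = 0 := by
    linear_combination ((starRingEnd ℂ) w) * h -
      (((k1:ℂ)+2)*w + (2*(k1:ℂ)+4*(k2:ℂ)))*hc
  rw [Complex.add_conj] at h2
  have hre : ((k1:ℝ)+2)*(2*w.re) + (2*(k1:ℝ)+4*(k2:ℝ)) = 0 := by
    exact_mod_cast h2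
  have hxge : (-1:ℝ) ≤ w.re := by
    have h := Complex.abs_re_le_norm w
    rw [habs] at h
    exact (abs_le.mp h).1
  have hmul := mul_le_mul_of_nonneg_left hxge
    (by positivity : (0:ℝ) ≤ ((k1:ℝ)+2)*2)
  have hk2le : (k2:ℝ) ≤ 1 := by nlinarith
  have : k2 ≤ 1 := by exact_mod_cast hk2le
  omega

/-- Lemma 13 of the paper: nonexistence for case (iii) of Song's lemma. -/
theorem stmt17 (k1 k2 : ℕ) (hk1 : 0 < k1) (hk2 : 0 < k2) (heven : Even k1)
    (hdvd : k1 + 1 ∣ (k1 + k2 + 1)*k1) :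
    ¬ ∃ w1 w2 w3 : ℂ, ‖w1‖ = 1 ∧ ‖w2‖ = 1 ∧ ‖w3‖ = 1 ∧
      w1 ≠ w2 ∧
      IsCommonZero (k1:ℝ) (k2:ℝ) (-1) (k1:ℝ)
        (Real.sqrt ((k1:ℝ)+1)) w1 w2 w3 := by
  rintro ⟨w1, w2, w3, habs1, habs2, habs3, hne, h0, h1, h2, h3⟩
  have hw3 : w3 ≠ 0 := by
    intro h; rw [h] at habs3; simp at habs3
  set b : ℝ := Real.sqrt ((k1:ℝ)+1) with hbdef
  have hbpos : 0 < b := Real.sqrt_pos.mpr (by positivity)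
  have hb2 : (b:ℂ)^2 = (k1:ℂ)+1 := by
    rw [← Complex.ofReal_pow, hbdef, Real.sq_sqrt (by positivity : (0:ℝ) ≤ (k1:ℝ)+1)]
    push_cast; ring
  set A : ℂ := ((-1 + (b:ℂ)*Complex.I)/2)*w1 + ((-1 - (b:ℂ)*Complex.I)/2)*w2 with hA
  set B : ℂ := ((-1 - (b:ℂ)*Complex.I)/2)*w1 + ((-1 + (b:ℂ)*Complex.I)/2)*w2 with hB
  have hfac1 : e1 (k1:ℝ) (k2:ℝ) (-1) b w1 w2 w3
      = w3 * (A^2 + (1+w1*w2)*A + (1 - (1+(k1:ℂ)+(k2:ℂ)))*(w1*w2)) := by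
    rw [hA]; simp only [e1]; push_cast; ring
  have hfac2 : e2 (k1:ℝ) (k2:ℝ) (-1) b w1 w2 w3
      = w3 * (B^2 + (1+w1*w2)*B + (1 - (1+(k1:ℂ)+(k2:ℂ)))*(w1*w2)) := by
    rw [hB]; simp only [e2]; push_cast; ring
  rw [hfac1] at h1
  rw [hfac2] at h2
  have hq1 : A^2 + (1+w1*w2)*A + (1 - (1+(k1:ℂ)+(k2:ℂ)))*(w1*w2) = 0 :=
    (mul_eq_zero.mp h1).resolve_left hw3
  have hq2 : B^2 + (1+w1*w2)*B + (1 - (1+(k1:ℂ)+(k2:ℂ)))*(w1*w2) = 0 :=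
    (mul_eq_zero.mp h2).resolve_left hw3
  have hABne : A - B ≠ 0 := by
    have hAB : A - B = (b:ℂ)*Complex.I*(w1 - w2) := by rw [hA, hB]; ring
    rw [hAB]
    exact mul_ne_zero (mul_ne_zero (Complex.ofReal_ne_zero.mpr hbpos.ne')
      Complex.I_ne_zero) (sub_ne_zero.mpr hne)
  have hfacS : (A - B)*(A + B + (1+w1*w2)) = 0 := by linear_combination hq1 - hq2
  have hsum : A + B = -(1+w1*w2) := by
    have := (mul_eq_zero.mp hfacS).resolve_left hABne
    linear_combination this
  have hw12 : (w1-1)*(w2-1) = 0 := by linear_combination hsum - hA - hB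
  have hprodAB : A*B = (1 - (1+(k1:ℂ)+(k2:ℂ)))*(w1*w2) := by
    linear_combination A*hsum - hq1
  rw [hA, hB] at hprodAB
  have hprod : ((k1:ℂ)+2)*(w1^2+w2^2) + (2*(k1:ℂ)+4*(k2:ℂ))*(w1*w2) = 0 := by
    linear_combination 4*hprodAB - (w1^2+w2^2-2*(w1*w2))*hb2 + (b:ℂ)^2*(w1^2+w2^2-2*(w1*w2))*Complex.I_sq
  have hk2eq : k2 = 1 := by
    rcases mul_eq_zero.mp hw12 with h | h
    · have hw1 : w1 = 1 := by linear_combination h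
      subst hw1
      exact key_aux k1 k2 hk2 w2 habs2 (by linear_combination hprod)
    · have hw2 : w2 = 1 := by linear_combination h
      subst hw2
      exact key_aux k1 k2 hk2 w1 habs1 (by linear_combination hprod)
  subst hk2eq
  have hd1 : k1 + 1 ∣ 1 := by
    have heq : (k1 + 1 + 1)*k1 + 1 = (k1+1)*(k1+1) := by ring
    have : k1 + 1 ∣ (k1 + 1 + 1)*k1 + 1 := by
      rw [heq]; exact dvd_mul_right _ _
    exact (Nat.dvd_add_right hdvd).mp this
  have := Nat.le_of_dvd one_pos hd1
  omega
end
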